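/- arXiv:1906.08583 — 2 statements merged into one kernel-verified Lean document; each statement's English description precedes it below -/
import Mathlib

section
/- Suppose Θ = 0, 𝒜 = 0, Q = 0 and Π = 0 identically on U, and that Σ is nowhere zero on U. Then φ·(ℰ + Σ²/4) = 0 at every point of U; consequently at every point of U either φ = 0 or ℰ = −Σ²/4. -/
/-- Partial derivative of a scalar field on `ℝ²` in the `t` (first-coordinate) direction. -/
noncomputable def pdt (f : ℝ × ℝ → ℝ) (x : ℝ × ℝ) : ℝ := fderiv ℝ f x (1, 0)

/-- Partial derivative of a scalar field on `ℝ²` in the `χ` (second-coordinate) direction. -/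
noncomputable def pdchi (f : ℝ × ℝ → ℝ) (x : ℝ × ℝ) : ℝ := fderiv ℝ f x (0, 1)

/-- Dot derivative `ψ̇ = (1/A) ∂ψ/∂t` relative to the metric function `A`. -/
noncomputable def dotd (A f : ℝ × ℝ → ℝ) (x : ℝ × ℝ) : ℝ := (1 / A x) * pdt f x

/-- Hat derivative `ψ̂ = (1/B) ∂ψ/∂χ` relative to the metric function `B`. -/
noncomputable def hatd (B f : ℝ × ℝ → ℝ) (x : ℝ × ℝ) : ℝ := (1 / B x) * pdchi f x

/-- The 1+1+2 covariant description of an LRS II spacetime on an open connected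
domain `U ⊆ ℝ²` with coordinates `(t, χ)`: metric functions `A, B > 0`, the covariant
scalars (acceleration `accel = 𝒜`, expansion `Theta = Θ`, sheet expansion `phi = φ`,
shear `Sigma = Σ`, electric Weyl `curlyE = ℰ`, energy density `rho = ρ`, pressure `p`,
anisotropic stress `Pi = Π`, heat flux `Q`), all smooth on `U`, together with the
compatibility conditions and the LRS II field equations. -/
structure LRSII where
  U : Set (ℝ × ℝ)
  hUopen : IsOpen U
  hUnonempty : U.Nonempty
  hUconn : IsConnected U
  A : ℝ × ℝ → ℝ
  B : ℝ × ℝ → ℝ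
  accel : ℝ × ℝ → ℝ
  Theta : ℝ × ℝ → ℝ
  phi : ℝ × ℝ → ℝ
  Sigma : ℝ × ℝ → ℝ
  curlyE : ℝ × ℝ → ℝ
  rho : ℝ × ℝ → ℝ
  p : ℝ × ℝ → ℝ
  Pi : ℝ × ℝ → ℝ
  Q : ℝ × ℝ → ℝ
  hApos : ∀ x ∈ U, 0 < A x
  hBpos : ∀ x ∈ U, 0 < B x
  hAsmooth : ContDiffOn ℝ (⊤ : ℕ∞) A U
  hBsmooth : ContDiffOn ℝ (⊤ : ℕ∞) B U
  haccel : ContDiffOn ℝ (⊤ : ℕ∞) accel U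
  hTheta : ContDiffOn ℝ (⊤ : ℕ∞) Theta U
  hphi : ContDiffOn ℝ (⊤ : ℕ∞) phi U
  hSigma : ContDiffOn ℝ (⊤ : ℕ∞) Sigma U
  hcurlyE : ContDiffOn ℝ (⊤ : ℕ∞) curlyE U
  hrho : ContDiffOn ℝ (⊤ : ℕ∞) rho U
  hp : ContDiffOn ℝ (⊤ : ℕ∞) p U
  hPi : ContDiffOn ℝ (⊤ : ℕ∞) Pi U
  hQ : ContDiffOn ℝ (⊤ : ℕ∞) Q U
  /-- `𝒜 = (∂A/∂χ)/(AB)` -/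
  compat1 : ∀ x ∈ U, accel x = pdchi A x / (A x * B x)
  /-- `Θ/3 + Σ = (∂B/∂t)/(AB)` -/
  compat2 : ∀ x ∈ U, Theta x / 3 + Sigma x = pdt B x / (A x * B x)
  /-- (E1) -/
  E1 : ∀ x ∈ U, (2 / 3) * dotd A Theta x - dotd A Sigma x =
      accel x * phi x - 2 * (Theta x / 3 - Sigma x / 2) ^ 2
        - (1 / 3) * (rho x + 3 * p x) + curlyE x - Pi x / 2
  /-- (E2) -/
  E2 : ∀ x ∈ U, dotd A phi x =
      (2 * Theta x / 3 - Sigma x) * (accel x - phi x / 2) + Q x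
  /-- (E3) -/
  E3 : ∀ x ∈ U, dotd A curlyE x - dotd A rho x / 3 + dotd A Pi x / 2 =
      -(3 / 2) * (2 * Theta x / 3 - Sigma x) * curlyE x
        - (1 / 4) * (2 * Theta x / 3 - Sigma x) * Pi x
        + (1 / 2) * phi x * Q x
        + (1 / 2) * (rho x + p x) * (2 * Theta x / 3 - Sigma x)
  /-- (P1) -/
  P1 : ∀ x ∈ U, (2 / 3) * hatd B Theta x - hatd B Sigma x =
      (3 / 2) * phi x * Sigma x + Q x
  /-- (P2) -/
  P2 : ∀ x ∈ U, hatd B phi x =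
      (Theta x / 3 + Sigma x) * (2 * Theta x / 3 - Sigma x)
        - phi x ^ 2 / 2 - (2 / 3) * rho x - curlyE x - Pi x / 2
  /-- (P3) -/
  P3 : ∀ x ∈ U, hatd B curlyE x - hatd B rho x / 3 + hatd B Pi x / 2 =
      -(3 / 2) * phi x * (curlyE x + Pi x / 2)
        - (1 / 2) * (2 * Theta x / 3 - Sigma x) * Q x
  /-- (M1) -/
  M1 : ∀ x ∈ U, hatd B accel x - dotd A Theta x =
      -(accel x + phi x) * accel x + Theta x ^ 2 / 3
        + (3 / 2) * Sigma x ^ 2 + (1 / 2) * (rho x + 3 * p x)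
  /-- (M2) -/
  M2 : ∀ x ∈ U, hatd B Q x + dotd A rho x =
      -Theta x * (rho x + p x) - (phi x + 2 * accel x) * Q x
        - (3 / 2) * Sigma x * Pi x
  /-- (M3) -/
  M3 : ∀ x ∈ U, hatd B p x + hatd B Pi x + dotd A Q x =
      -((3 / 2) * phi x + accel x) * Pi x - (4 * Theta x / 3 + Sigma x) * Q x
        - (rho x + p x) * accel x

open Filter in
private lemma LRSII.fd_congr_on {f g : ℝ×ℝ→ℝ} {U : Set (ℝ×ℝ)} (hU : IsOpen U) {x} (hx : x ∈ U)
    (h : ∀ y ∈ U, f y = g y) : fderiv ℝ f x = fderiv ℝ g x :=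
  Filter.EventuallyEq.fderiv_eq (Filter.eventuallyEq_of_mem (hU.mem_nhds hx) h)

private lemma LRSII.fd_zero_on {f : ℝ×ℝ→ℝ} {U : Set (ℝ×ℝ)} (hU : IsOpen U) {x} (hx : x ∈ U)
    (h : ∀ y ∈ U, f y = 0) : fderiv ℝ f x = 0 := by
  rw [LRSII.fd_congr_on hU hx (g := fun _ => (0:ℝ)) h]
  exact fderiv_const_apply 0

private lemma LRSII.pdt_zero_on {f : ℝ×ℝ→ℝ} {U : Set (ℝ×ℝ)} (hU : IsOpen U) {x} (hx : x ∈ U)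
    (h : ∀ y ∈ U, f y = 0) : pdt f x = 0 := by
  unfold pdt; rw [LRSII.fd_zero_on hU hx h]; rfl

private lemma LRSII.pdchi_zero_on {f : ℝ×ℝ→ℝ} {U : Set (ℝ×ℝ)} (hU : IsOpen U) {x} (hx : x ∈ U)
    (h : ∀ y ∈ U, f y = 0) : pdchi f x = 0 := by
  unfold pdchi; rw [LRSII.fd_zero_on hU hx h]; rfl

private lemma LRSII.fd_mul {f g : ℝ×ℝ→ℝ} {x : ℝ×ℝ} (hf : DifferentiableAt ℝ f x)
    (hg : DifferentiableAt ℝ g x) (v : ℝ×ℝ) :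
    fderiv ℝ (fun y => f y * g y) x v = f x * fderiv ℝ g x v + g x * fderiv ℝ f x v := by
  have H : fderiv ℝ (fun y => f y * g y) x = f x • fderiv ℝ g x + g x • fderiv ℝ f x :=
    (hf.hasFDerivAt.mul hg.hasFDerivAt).fderiv
  rw [H]; simp

private lemma LRSII.fd_lin {f g : ℝ×ℝ→ℝ} {x : ℝ×ℝ} (a b : ℝ) (hf : DifferentiableAt ℝ f x)
    (hg : DifferentiableAt ℝ g x) (v : ℝ×ℝ) :
    fderiv ℝ (fun y => a * f y + b * g y) x v = a * fderiv ℝ f x v + b * fderiv ℝ g x v := by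
  have H : fderiv ℝ (fun y => a * f y + b * g y) x = a • fderiv ℝ f x + b • fderiv ℝ g x :=
    ((hf.hasFDerivAt.const_mul a).add (hg.hasFDerivAt.const_mul b)).fderiv
  rw [H]; simp

private lemma LRSII.fd_const_mul {f : ℝ×ℝ→ℝ} {x : ℝ×ℝ} (a : ℝ) (hf : DifferentiableAt ℝ f x)
    (v : ℝ×ℝ) : fderiv ℝ (fun y => a * f y) x v = a * fderiv ℝ f x v := by
  have H : fderiv ℝ (fun y => a * f y) x = a • fderiv ℝ f x :=
    (hf.hasFDerivAt.const_mul a).fderiv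
  rw [H]; simp

private lemma LRSII.clairaut {f : ℝ × ℝ → ℝ} {x : ℝ × ℝ} (hf : ContDiffAt ℝ 2 f x) :
    pdchi (pdt f) x = pdt (pdchi f) x := by
  have hd : DifferentiableAt ℝ (fderiv ℝ f) x :=
    (hf.fderiv_right (m := 1) (by norm_num)).differentiableAt one_ne_zero
  have key : ∀ v w : ℝ × ℝ,
      fderiv ℝ (fun y => fderiv ℝ f y v) x w = fderiv ℝ (fderiv ℝ f) x w v := by
    intro v w
    have h2 := fderiv_clm_apply hd (differentiableAt_const v)
    have h3 : (fun y => fderiv ℝ f y v) = fun y => (fderiv ℝ f y) ((fun _ : ℝ×ℝ => v) y) := rfl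
    rw [h3, h2]
    simp
  have hsymm := hf.isSymmSndFDerivAt (by simp [minSmoothness_of_isRCLikeNormedField])
  show fderiv ℝ (fun y => fderiv ℝ f y (1,0)) x (0,1)
      = fderiv ℝ (fun y => fderiv ℝ f y (0,1)) x (1,0)
  rw [key, key]
  exact hsymm _ _



theorem stmt_7 (S : LRSII)
    (hTheta : ∀ x ∈ S.U, S.Theta x = 0)
    (haccel : ∀ x ∈ S.U, S.accel x = 0)
    (hQ : ∀ x ∈ S.U, S.Q x = 0)
    (hPi : ∀ x ∈ S.U, S.Pi x = 0)
    (hSigma_ne : ∀ x ∈ S.U, S.Sigma x ≠ 0) :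
    ∀ x ∈ S.U, S.phi x * (S.curlyE x + S.Sigma x ^ 2 / 4) = 0 ∧
      (S.phi x = 0 ∨ S.curlyE x = -(S.Sigma x ^ 2) / 4) := by
  have hUo := S.hUopen
  have hphi0 : ∀ x ∈ S.U, S.phi x = 0 := by
    -- basic nonvanishing and differentiability facts
    have hAne : ∀ y ∈ S.U, S.A y ≠ 0 := fun y hy => (S.hApos y hy).ne'
    have hBne : ∀ y ∈ S.U, S.B y ≠ 0 := fun y hy => (S.hBpos y hy).ne'
    have hdA : ∀ y ∈ S.U, DifferentiableAt ℝ S.A y := fun y hy =>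
      (S.hAsmooth.contDiffAt (hUo.mem_nhds hy)).differentiableAt (by simp)
    have hdS : ∀ y ∈ S.U, DifferentiableAt ℝ S.Sigma y := fun y hy =>
      (S.hSigma.contDiffAt (hUo.mem_nhds hy)).differentiableAt (by simp)
    have hdE : ∀ y ∈ S.U, DifferentiableAt ℝ S.curlyE y := fun y hy =>
      (S.hcurlyE.contDiffAt (hUo.mem_nhds hy)).differentiableAt (by simp)
    have hdp : ∀ y ∈ S.U, DifferentiableAt ℝ S.p y := fun y hy =>
      (S.hp.contDiffAt (hUo.mem_nhds hy)).differentiableAt (by simp)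
    -- derivatives of the vanishing scalars are zero on U
    have hTt : ∀ y ∈ S.U, pdt S.Theta y = 0 := fun y hy => LRSII.pdt_zero_on hUo hy hTheta
    have hTc : ∀ y ∈ S.U, pdchi S.Theta y = 0 := fun y hy => LRSII.pdchi_zero_on hUo hy hTheta
    have hac : ∀ y ∈ S.U, pdchi S.accel y = 0 := fun y hy => LRSII.pdchi_zero_on hUo hy haccel
    have hQt : ∀ y ∈ S.U, pdt S.Q y = 0 := fun y hy => LRSII.pdt_zero_on hUo hy hQ
    have hQc : ∀ y ∈ S.U, pdchi S.Q y = 0 := fun y hy => LRSII.pdchi_zero_on hUo hy hQ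
    have hPt : ∀ y ∈ S.U, pdt S.Pi y = 0 := fun y hy => LRSII.pdt_zero_on hUo hy hPi
    have hPc : ∀ y ∈ S.U, pdchi S.Pi y = 0 := fun y hy => LRSII.pdchi_zero_on hUo hy hPi
    -- pdchi A = 0 from compat1
    have hpA : ∀ y ∈ S.U, pdchi S.A y = 0 := by
      intro y hy
      have h1 := S.compat1 y hy
      rw [haccel y hy] at h1
      rcases div_eq_zero_iff.mp h1.symm with h | h
      · exact h
      · exact absurd h (mul_ne_zero (hAne y hy) (hBne y hy))
    -- (id1)  ρ + 3p = −3Σ²   from M1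
    have hid1 : ∀ y ∈ S.U, S.rho y + 3 * S.p y = -3 * (S.Sigma y * S.Sigma y) := by
      intro y hy
      have h := S.M1 y hy
      simp only [hatd, dotd] at h
      rw [haccel y hy, hTheta y hy, hac y hy, hTt y hy] at h
      nlinarith [h]
    -- (id2)  pdt Σ = A(−Σ²/2 − ℰ)   from E1
    have hid2 : ∀ y ∈ S.U, pdt S.Sigma y
        = S.A y * (-(S.Sigma y * S.Sigma y) / 2 - S.curlyE y) := by
      intro y hy
      have h := S.E1 y hy
      simp only [dotd] at h
      rw [haccel y hy, hTheta y hy, hTt y hy, hPi y hy, hid1 y hy] at h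
      have hA := hAne y hy
      field_simp at h
      nlinarith [h]
    -- (id3)  pdt ρ = 0   from M2
    have hid3 : ∀ y ∈ S.U, pdt S.rho y = 0 := by
      intro y hy
      have h := S.M2 y hy
      simp only [hatd, dotd] at h
      rw [hTheta y hy, hQ y hy, hQc y hy, hPi y hy] at h
      have hA := hAne y hy
      field_simp at h
      linear_combination h / 2
    -- (id4)  pdchi p = 0   from M3
    have hid4 : ∀ y ∈ S.U, pdchi S.p y = 0 := by
      intro y hy
      have h := S.M3 y hy
      simp only [hatd, dotd] at h
      rw [hTheta y hy, hQ y hy, hQt y hy, hPi y hy, hPc y hy, haccel y hy] at h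
      have hB := hBne y hy
      field_simp at h
      linear_combination h / 6
    -- (id5)  pdchi Σ = B·(−(3/2)φΣ)   from P1
    have hid5 : ∀ y ∈ S.U, pdchi S.Sigma y
        = S.B y * (-(3 / 2) * S.phi y * S.Sigma y) := by
      intro y hy
      have h := S.P1 y hy
      simp only [hatd] at h
      rw [hTc y hy, hQ y hy] at h
      have hB := hBne y hy
      field_simp at h
      nlinarith [h]
    -- (id6)  pdchi ρ = 9BφΣ²  and  (id7)  pdt p = A(Σ³ + 2Σℰ), by differentiating id1
    have hid67 : ∀ y ∈ S.U, pdchi S.rho y = 9 * S.B y * S.phi y * (S.Sigma y * S.Sigma y)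
        ∧ pdt S.p y = S.A y * (S.Sigma y * S.Sigma y * S.Sigma y
            + 2 * (S.Sigma y * S.curlyE y)) := by
      intro y hy
      have hcongr : fderiv ℝ S.rho y
          = fderiv ℝ (fun z => (-3) * S.p z + (-3) * (S.Sigma z * S.Sigma z)) y := by
        apply LRSII.fd_congr_on hUo hy
        intro z hz
        have := hid1 z hz
        ring_nf
        ring_nf at this
        linarith [this]
      have hdSS : DifferentiableAt ℝ (fun z => S.Sigma z * S.Sigma z) y :=
        (hdS y hy).mul (hdS y hy)
      have hlin := fun v => LRSII.fd_lin (-3) (-3) (hdp y hy) hdSS (x := y) v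
      have hmul := fun v => LRSII.fd_mul (hdS y hy) (hdS y hy) (x := y) v
      constructor
      · have e1 : pdchi S.rho y = fderiv ℝ (fun z => (-3) * S.p z
            + (-3) * (S.Sigma z * S.Sigma z)) y (0,1) := by
          unfold pdchi; rw [hcongr]
        rw [e1, hlin (0,1), hmul (0,1)]
        have := hid4 y hy
        unfold pdchi at this
        rw [this]
        have := hid5 y hy
        unfold pdchi at this
        rw [this]
        ring
      · have e1 : pdt S.rho y = fderiv ℝ (fun z => (-3) * S.p z
            + (-3) * (S.Sigma z * S.Sigma z)) y (1,0) := by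
          unfold pdt; rw [hcongr]
        rw [hid3 y hy] at e1
        rw [hlin (1,0), hmul (1,0)] at e1
        have h2 := hid2 y hy
        unfold pdt at h2 ⊢
        rw [h2] at e1
        nlinarith [e1]
    -- (id8)  pdchi ℰ = B(3φΣ² − (3/2)φℰ)   from P3
    have hid8 : ∀ y ∈ S.U, pdchi S.curlyE y
        = S.B y * (3 * S.phi y * (S.Sigma y * S.Sigma y)
            - (3 / 2) * S.phi y * S.curlyE y) := by
      intro y hy
      have h := S.P3 y hy
      simp only [hatd] at h
      rw [hTheta y hy, hQ y hy, hPi y hy, hPc y hy, (hid67 y hy).1] at h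
      have hB := hBne y hy
      field_simp at h
      have h12 : 12 * S.B y * (pdchi S.curlyE y
          - S.B y * (3 * S.phi y * (S.Sigma y * S.Sigma y)
            - (3 / 2) * S.phi y * S.curlyE y)) = 0 := by linear_combination S.B y * h
      have h13 := (mul_eq_zero.mp h12).resolve_left (by positivity)
      linarith [h13]
    -- key identity:  φΣ(Σ² − 4ℰ) = 0 on U,  via Clairaut applied to p
    have hkey : ∀ y ∈ S.U, S.phi y * (S.Sigma y * S.Sigma y - 4 * S.curlyE y) = 0 := by
      intro y hy
      have hcl : pdchi (pdt S.p) y = 0 := by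
        rw [LRSII.clairaut ((S.hp.contDiffAt (hUo.mem_nhds hy)).of_le (WithTop.coe_le_coe.mpr le_top))]
        apply LRSII.pdt_zero_on hUo hy
        exact hid4
      have hcongr : fderiv ℝ (pdt S.p) y
          = fderiv ℝ (fun z => S.A z * (S.Sigma z * S.Sigma z * S.Sigma z
              + 2 * (S.Sigma z * S.curlyE z))) y := by
        apply LRSII.fd_congr_on hUo hy
        intro z hz
        exact (hid67 z hz).2
      have hdSS : DifferentiableAt ℝ (fun z => S.Sigma z * S.Sigma z) y :=
        (hdS y hy).mul (hdS y hy)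
      have hdS3 : DifferentiableAt ℝ (fun z => S.Sigma z * S.Sigma z * S.Sigma z) y :=
        hdSS.mul (hdS y hy)
      have hdSE : DifferentiableAt ℝ (fun z => S.Sigma z * S.curlyE z) y :=
        (hdS y hy).mul (hdE y hy)
      have hdin : DifferentiableAt ℝ (fun z => S.Sigma z * S.Sigma z * S.Sigma z
          + 2 * (S.Sigma z * S.curlyE z)) y := by
        have : (fun z => S.Sigma z * S.Sigma z * S.Sigma z + 2 * (S.Sigma z * S.curlyE z))
            = fun z => 1 * (S.Sigma z * S.Sigma z * S.Sigma z) + 2 * (S.Sigma z * S.curlyE z) := by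
          funext z; ring
        rw [this]
        exact ((hdS3.const_mul 1).add (hdSE.const_mul 2))
      have e0 : pdchi (pdt S.p) y = fderiv ℝ (fun z => S.A z
          * (S.Sigma z * S.Sigma z * S.Sigma z + 2 * (S.Sigma z * S.curlyE z))) y (0,1) := by
        unfold pdchi; rw [hcongr]
      rw [e0] at hcl
      rw [LRSII.fd_mul (hdA y hy) hdin (0,1)] at hcl
      have einner : fderiv ℝ (fun z => S.Sigma z * S.Sigma z * S.Sigma z
          + 2 * (S.Sigma z * S.curlyE z)) y (0,1)
          = (fun z => 3 * (S.Sigma z * S.Sigma z) * pdchi S.Sigma z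
              + 2 * (S.Sigma z * pdchi S.curlyE z + S.curlyE z * pdchi S.Sigma z)) y := by
        have h4 : (fun z => S.Sigma z * S.Sigma z * S.Sigma z + 2 * (S.Sigma z * S.curlyE z))
            = fun z => 1 * (S.Sigma z * S.Sigma z * S.Sigma z) + 2 * (S.Sigma z * S.curlyE z) := by
          funext z; ring
        rw [h4, LRSII.fd_lin 1 2 hdS3 hdSE (0,1), LRSII.fd_mul hdSS (hdS y hy) (0,1),
          LRSII.fd_mul (hdS y hy) (hdS y hy) (0,1), LRSII.fd_mul (hdS y hy) (hdE y hy) (0,1)]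
        unfold pdchi
        ring
      rw [einner] at hcl
      simp only at hcl
      have hpA' : fderiv ℝ S.A y (0,1) = 0 := hpA y hy
      rw [hpA', hid5 y hy, hid8 y hy] at hcl
      have hA := hAne y hy
      have hB := hBne y hy
      have h9 : S.A y * (S.B y * (S.phi y * S.Sigma y
          * (S.Sigma y * S.Sigma y - 4 * S.curlyE y))) = 0 := by nlinarith [hcl]
      have h10 := (mul_eq_zero.mp h9).resolve_left hA
      have h11 := (mul_eq_zero.mp h10).resolve_left hB
      have h12 := mul_eq_zero.mp h11
      rcases h12 with h12 | h12
      · rcases mul_eq_zero.mp h12 with h13 | h13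
        · rw [h13]; ring
        · exact absurd h13 (hSigma_ne y hy)
      · rw [h12]; ring
    -- now suppose φ x ≠ 0 and derive a contradiction
    intro x hx
    by_contra hphix
    set V : Set (ℝ × ℝ) := S.U ∩ S.phi ⁻¹' {0}ᶜ with hV
    have hVopen : IsOpen V :=
      S.hphi.continuousOn.isOpen_inter_preimage hUo isOpen_compl_singleton
    have hxV : x ∈ V := ⟨hx, by simpa using hphix⟩
    have hEV : ∀ y ∈ V, S.curlyE y = (1/4) * (S.Sigma y * S.Sigma y) := by
      rintro y ⟨hy, hyphi⟩
      have h := hkey y hy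
      have hphi : S.phi y ≠ 0 := by simpa using hyphi
      have h2 := (mul_eq_zero.mp h).resolve_left hphi
      linarith [h2]
    have hcongr : fderiv ℝ S.curlyE x
        = fderiv ℝ (fun z => (1/4) * (S.Sigma z * S.Sigma z)) x := by
      apply LRSII.fd_congr_on hVopen hxV hEV
    have hdSS : DifferentiableAt ℝ (fun z => S.Sigma z * S.Sigma z) x :=
      (hdS x hx).mul (hdS x hx)
    have e1 : pdchi S.curlyE x
        = (1/4) * (S.Sigma x * pdchi S.Sigma x + S.Sigma x * pdchi S.Sigma x) := by
      unfold pdchi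
      rw [hcongr, LRSII.fd_const_mul (1/4) hdSS (0,1), LRSII.fd_mul (hdS x hx) (hdS x hx) (0,1)]
    rw [hid8 x hx, hid5 x hx, hEV x hxV] at e1
    have hB := (S.hBpos x hx).ne'
    have hSx := hSigma_ne x hx
    have : S.B x * (S.phi x * (S.Sigma x * S.Sigma x)) = 0 := by linear_combination (8/27 : ℝ) * e1
    have h2 := (mul_eq_zero.mp this).resolve_left hB
    rcases mul_eq_zero.mp h2 with h3 | h3
    · exact hphix h3
    · exact hSx ((mul_self_eq_zero).mp h3)
  intro x hx
  refine ⟨?_, Or.inl (hphi0 x hx)⟩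
  rw [hphi0 x hx]
  ring
end

section
/- Suppose Θ = 0, 𝒜 = 0, Q = 0, Π = 0 and φ = 0 identically on U. Then Σ² = −(2/3)ρ − ℰ and ℰ = −(1/3)(ρ − 3p) at every point of U. -/
lemma fderiv_zero_of_eqOn_zero {U : Set (ℝ × ℝ)} (hU : IsOpen U) {f : ℝ × ℝ → ℝ}
    (hf : ∀ x ∈ U, f x = 0) {x : ℝ × ℝ} (hx : x ∈ U) : fderiv ℝ f x = 0 := by
  have h : f =ᶠ[nhds x] (fun _ => (0 : ℝ)) :=
    Filter.eventuallyEq_of_mem (hU.mem_nhds hx) hf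
  rw [h.fderiv_eq, fderiv_fun_const]
  rfl

theorem stmt_8 (S : LRSII)
    (hTheta : ∀ x ∈ S.U, S.Theta x = 0)
    (haccel : ∀ x ∈ S.U, S.accel x = 0)
    (hQ : ∀ x ∈ S.U, S.Q x = 0)
    (hPi : ∀ x ∈ S.U, S.Pi x = 0)
    (hphi : ∀ x ∈ S.U, S.phi x = 0) :
    ∀ x ∈ S.U, S.Sigma x ^ 2 = -(2 / 3) * S.rho x - S.curlyE x ∧
      S.curlyE x = -(1 / 3) * (S.rho x - 3 * S.p x) := by
  intro x hx
  have hP2 := S.P2 x hx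
  have hM1 := S.M1 x hx
  have hdphi : hatd S.B S.phi x = 0 := by
    simp [hatd, pdchi, fderiv_zero_of_eqOn_zero S.hUopen hphi hx]
  have hdacc : hatd S.B S.accel x = 0 := by
    simp [hatd, pdchi, fderiv_zero_of_eqOn_zero S.hUopen haccel hx]
  have hdTheta : dotd S.A S.Theta x = 0 := by
    simp [dotd, pdt, fderiv_zero_of_eqOn_zero S.hUopen hTheta hx]
  rw [hdphi, hTheta x hx, hphi x hx, hPi x hx] at hP2
  rw [hdacc, hdTheta, hTheta x hx, haccel x hx, hphi x hx] at hM1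
  constructor <;> nlinarith [hP2, hM1]
end
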